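/- Suppose that at time t it holds that Δ_{p₁}(t) ≤ −1 and Δ_{p₂}(t) ≥ 1 for some p₁ < p₂ in P. If at step t+1 the forecaster predicts p₁ with probability 1/2 and p₂ with probability 1/2 (independently of the adversary's bit b(t+1)), then for either fixed value b(t+1) ∈ {0,1}, the expected calibration error after step t+1 satisfies E[calerr(t+1)] = calerr(t) − (p₂ − p₁)/2; in particular E[calerr(t+1)] ≤ calerr(t). -/

import Mathlib

open scoped Classical

/-- A transcript of play: the list of (prediction, bit) pairs so far, earliest first. -/
abbrev Transcript : Type := List (ℝ × Bool)

/-- `Δ h p` is the bias `m_p - n_p * p` of prediction value `p` in transcript `h`. -/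
noncomputable def bias (h : Transcript) (p : ℝ) : ℝ :=
  ((h.filter fun x => decide (x.1 = p ∧ x.2 = true)).length : ℝ)
    - ((h.filter fun x => decide (x.1 = p)).length : ℝ) * p

/-- The calibration error of a transcript. -/
noncomputable def calErr (h : Transcript) : ℝ :=
  ∑ p ∈ (h.map Prod.fst).toFinset, |bias h p|

/-- Bernoulli distribution on `Bool` with parameter `p` (junk if `p > 1` or `p < 0`). -/
noncomputable def bern (p : ℝ) : PMF Bool :=
  if h : ENNReal.ofReal p ≤ 1 then PMF.bernoulli (Real.toNNReal p) (ENNReal.coe_le_one_iff.mp h) else PMF.pure true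

/-- Distribution over transcripts after `T` steps, where the forecaster samples a prediction
from `F h` and the adversary simultaneously samples a bit from `A h`. -/
noncomputable def playDist (F : Transcript → PMF ℝ) (A : Transcript → PMF Bool) :
    ℕ → PMF Transcript
  | 0 => PMF.pure []
  | T + 1 => (playDist F A T).bind fun h =>
      (F h).bind fun p => (A h).map fun b => h ++ [(p, b)]

/-- Expected calibration error after `T` steps. -/
noncomputable def expCalErr (F : Transcript → PMF ℝ) (A : Transcript → PMF Bool) (T : ℕ) : ℝ :=
  ∑' h : Transcript, (playDist F A T h).toReal * calErr h

/-- Probability of an event under a PMF on transcripts. -/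
noncomputable def prEvent (μ : PMF Transcript) (E : Transcript → Prop) : ℝ :=
  (∑' h : Transcript, if E h then μ h else 0).toReal

/-- maximum cumulative calibration error over all prefixes of a transcript. -/
noncomputable def maxCalErr (h : Transcript) : ℝ :=
  (Finset.range (h.length + 1)).sup' (by simp) fun t => calErr (h.take t)

/-- Play with an adversary that may stop early (`none`); second component records stopping. -/
noncomputable def playStop (F : Transcript → PMF ℝ) (A : Transcript → PMF (Option Bool)) :
    ℕ → PMF (Transcript × Bool)
  | 0 => PMF.pure ([], false)
  | T + 1 => (playStop F A T).bind fun s =>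
      if s.2 then PMF.pure s
      else (A s.1).bind fun ob =>
        match ob with
        | none => PMF.pure (s.1, true)
        | some b => (F s.1).map fun p => (s.1 ++ [(p, b)], false)

lemma bias_append (h : Transcript) (p : ℝ) (b : Bool) (q : ℝ) :
    bias (h ++ [(p, b)]) q
      = bias h q + (if q = p then ((if b then (1:ℝ) else 0) - q) else 0) := by
  by_cases hq : q = p
  · subst hq; cases b <;> simp [bias, List.filter_append] <;> push_cast <;> ring
  · have hq' : ¬ p = q := fun e => hq e.symm
    simp [bias, List.filter_append, hq, hq']

lemma bias_eq_zero_of_not_mem (h : Transcript) (q : ℝ)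
    (hq : q ∉ (h.map Prod.fst).toFinset) : bias h q = 0 := by
  simp only [List.mem_toFinset, List.mem_map, not_exists, not_and] at hq
  have h1 : (h.filter fun x => decide (x.1 = q)) = [] := by
    rw [List.filter_eq_nil_iff]
    intro a ha
    simp [hq a ha]
  have h2 : (h.filter fun x => decide (x.1 = q ∧ x.2 = true)) = [] := by
    rw [List.filter_eq_nil_iff]
    intro a ha
    simp only [decide_eq_true_eq, not_and]
    intro h'
    exact absurd h' (hq a ha)
  simp only [bias]
  rw [h1, h2]
  simp

lemma calErr_append (h : Transcript) (p : ℝ) (b : Bool) :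
    calErr (h ++ [(p, b)])
      = calErr h - |bias h p| + |bias h p + ((if b then (1:ℝ) else 0) - p)| := by
  classical
  set S := (h.map Prod.fst).toFinset with hS
  have hset : ((h ++ [(p, b)]).map Prod.fst).toFinset = insert p S := by
    simp only [List.map_append, List.toFinset_append, List.map_cons, List.map_nil,
      List.toFinset_cons, List.toFinset_nil, insert_empty_eq, hS]
    rw [Finset.union_comm, ← Finset.insert_eq]
  have key : ∀ q ∈ (insert p S).erase p, bias (h ++ [(p,b)]) q = bias h q := by
    intro q hq
    rw [bias_append]
    simp [Finset.ne_of_mem_erase hq]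
  have hsum : calErr h = |bias h p| + ∑ q ∈ S.erase p, |bias h q| := by
    by_cases hmem : p ∈ S
    · rw [calErr, ← Finset.add_sum_erase S _ hmem]
    · rw [calErr, Finset.erase_eq_of_notMem hmem,
        bias_eq_zero_of_not_mem h p hmem]
      simp [hS]
  rw [calErr, hset, ← Finset.add_sum_erase _ _ (Finset.mem_insert_self p S),
    bias_append]
  simp only [if_true, ite_true, eq_self_iff_true]
  rw [Finset.sum_congr rfl (fun q hq => by rw [key q hq]),
    Finset.erase_insert_eq_erase, hsum]
  ring

/-- **forecast hedging.** Suppose after the transcript `h` (time `t`) it holds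
that `Δ_{p₁}(t) ≤ −1` and `Δ_{p₂}(t) ≥ 1` for some `p₁ < p₂` in `P ⊆ [0,1]`. If at step `t+1`
the forecaster predicts `p₁` or `p₂` each with probability `1/2` (independently of the bit
`b(t+1)`), then for either fixed value of the bit `b`, the expected calibration error after step
`t+1` equals `calerr(t) − (p₂ − p₁)/2`; in particular it is at most `calerr(t)`. -/
theorem forecast_hedging (h : Transcript) (p₁ p₂ : ℝ)
    (hp₁ : p₁ ∈ Set.Icc (0 : ℝ) 1) (hp₂ : p₂ ∈ Set.Icc (0 : ℝ) 1) (hlt : p₁ < p₂)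
    (hΔ₁ : bias h p₁ ≤ -1) (hΔ₂ : 1 ≤ bias h p₂) (b : Bool) :
    (calErr (h ++ [(p₁, b)]) + calErr (h ++ [(p₂, b)])) / 2
        = calErr h - (p₂ - p₁) / 2 ∧
      (calErr (h ++ [(p₁, b)]) + calErr (h ++ [(p₂, b)])) / 2 ≤ calErr h := by
  obtain ⟨h10, h11⟩ := hp₁
  obtain ⟨h20, h21⟩ := hp₂
  set c : ℝ := if b then 1 else 0 with hc
  have hc0 : 0 ≤ c := by cases b <;> simp [hc]
  have hc1 : c ≤ 1 := by cases b <;> simp [hc]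
  have e1 : calErr (h ++ [(p₁, b)]) = calErr h - (c - p₁) := by
    rw [calErr_append, ← hc, abs_of_nonpos (by linarith : bias h p₁ + (c - p₁) ≤ 0),
      abs_of_nonpos (by linarith : bias h p₁ ≤ 0)]
    ring
  have e2 : calErr (h ++ [(p₂, b)]) = calErr h + (c - p₂) := by
    rw [calErr_append, ← hc, abs_of_nonneg (by linarith : (0:ℝ) ≤ bias h p₂ + (c - p₂)),
      abs_of_nonneg (by linarith : (0:ℝ) ≤ bias h p₂)]
    ring
  constructor
  · rw [e1, e2]; ring
  · rw [e1, e2]; linarith
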